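/- arXiv:1503.02341 — 2 statements merged into one kernel-verified Lean document; each statement's English description precedes it below -/
import Mathlib

section
/- Let (Y,T) be a 3-equivalenced association scheme. For all u ∈ T ∖ {1_Y}, exactly one of the following holds: (i) there is w ∈ T with w ≠ w* and σ_u σ_{u*} = 3 σ_{1_Y} + σ_w + σ_{w*}; or (ii) u = u* and σ_u σ_{u*} = 3 σ_{1_Y} + 2 σ_u. -/
open Matrix BigOperators Kronecker
open scoped Classical

section Defs

variable {Z : Type*} [Fintype Z] [DecidableEq Z]

/-- The identity (diagonal) relation on `Z`. -/
def diagRel (Z : Type*) [Fintype Z] [DecidableEq Z] : Finset (Z × Z) :=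
  Finset.univ.filter fun p => p.1 = p.2

/-- The converse relation. -/
def convRel (s : Finset (Z × Z)) : Finset (Z × Z) := s.image fun p => (p.2, p.1)

/-- The intersection number `p_{st}^u`, computed at an arbitrary pair of `u`. -/
noncomputable def pNum (s t u : Finset (Z × Z)) : ℕ :=
  if h : u.Nonempty then
    (Finset.univ.filter fun z => (h.choose.1, z) ∈ s ∧ (z, h.choose.2) ∈ t).card
  else 0

/-- The valency `n_s = p_{s s*}^{1}`. -/
noncomputable def valency (s : Finset (Z × Z)) : ℕ := pNum s (convRel s) (diagRel Z)

/-- The adjacency matrix of a relation. -/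
def adjMat (s : Finset (Z × Z)) : Matrix Z Z ℂ :=
  Matrix.of fun x y => if (x, y) ∈ s then 1 else 0

/-- The diagonal 0/1 matrix of a subset. -/
def eps (U : Finset Z) : Matrix Z Z ℂ := Matrix.diagonal fun i => if i ∈ U then 1 else 0

/-- The all-ones matrix. -/
def allOnes (Z : Type*) : Matrix Z Z ℂ := Matrix.of fun _ _ => 1

/-- `pointFiber x s = xs = {y : (x,y) ∈ s}`. -/
def pointFiber (x : Z) (s : Finset (Z × Z)) : Finset Z :=
  Finset.univ.filter fun y => (x, y) ∈ s

/-- An association scheme on a finite set `Z`: a partition of `Z × Z` into nonempty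
relations containing the identity relation, closed under converse, and with
well-defined intersection numbers. -/
structure AssocScheme (Z : Type*) [Fintype Z] [DecidableEq Z] where
  rels : Finset (Finset (Z × Z))
  nonempty_mem : ∀ s ∈ rels, s.Nonempty
  cover : ∀ p : Z × Z, ∃ s ∈ rels, p ∈ s
  pairwise_disjoint : ∀ s ∈ rels, ∀ t ∈ rels, s ≠ t → Disjoint s t
  id_mem : diagRel Z ∈ rels
  conv_mem : ∀ s ∈ rels, convRel s ∈ rels
  pconst : ∀ s ∈ rels, ∀ t ∈ rels, ∀ u ∈ rels, ∀ p ∈ u, ∀ q ∈ u,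
    (Finset.univ.filter fun z => (p.1, z) ∈ s ∧ (z, p.2) ∈ t).card =
    (Finset.univ.filter fun z => (q.1, z) ∈ s ∧ (z, q.2) ∈ t).card

/-- A scheme is 3-equivalenced when it has more than one point and every
non-identity basic relation has valency 3. -/
def ThreeEquivalenced (B : AssocScheme Z) : Prop :=
  1 < Fintype.card Z ∧ ∀ t ∈ B.rels, t ≠ diagRel Z → valency t = 3

/-- A scheme is k-equivalenced when it has more than one point and every
non-identity basic relation has valency k. -/
def KEquivalenced (B : AssocScheme Z) (k : ℕ) : Prop :=
  1 < Fintype.card Z ∧ ∀ t ∈ B.rels, t ≠ diagRel Z → valency t = k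

/-- A scheme is imprimitive if some union of basic relations is an equivalence
relation different from the identity relation and from the full relation. -/
def Imprimitive (B : AssocScheme Z) : Prop :=
  ∃ R ⊆ B.rels, Equivalence (fun x y : Z => (x, y) ∈ R.sup id) ∧
    R.sup id ≠ diagRel Z ∧ R.sup id ≠ Finset.univ

/-- A coherent algebra: a subalgebra of the matrix algebra containing the all-ones
matrix (and the identity), closed under conjugate transpose and Hadamard product. -/
def IsCoherent (𝒜 : Subalgebra ℂ (Matrix Z Z ℂ)) : Prop :=
  allOnes Z ∈ 𝒜 ∧ (∀ M ∈ 𝒜, Mᴴ ∈ 𝒜) ∧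
  ∀ M ∈ 𝒜, ∀ N ∈ 𝒜, Matrix.hadamard M N ∈ 𝒜

/-- The one-point-extension algebra: the smallest coherent algebra containing all
adjacency matrices of the scheme and the diagonal matrix unit at `x`. -/
noncomputable def onePointAlg (B : AssocScheme Z) (x : Z) : Subalgebra ℂ (Matrix Z Z ℂ) :=
  sInf {𝒜 | IsCoherent 𝒜 ∧ (∀ s ∈ B.rels, adjMat s ∈ 𝒜) ∧ eps {x} ∈ 𝒜}

/-- A matrix has only 0/1 entries. -/
def IsZeroOne (M : Matrix Z Z ℂ) : Prop := ∀ i j, M i j = 0 ∨ M i j = 1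

/-- A basic relation matrix of a coherent algebra: a nonzero 0/1 matrix in the
algebra whose only 0/1 minorants in the algebra are 0 and itself. -/
def IsBasicMatrix (𝒜 : Subalgebra ℂ (Matrix Z Z ℂ)) (B : Matrix Z Z ℂ) : Prop :=
  B ∈ 𝒜 ∧ IsZeroOne B ∧ B ≠ 0 ∧
  ∀ C ∈ 𝒜, IsZeroOne C → (∀ i j, C i j = 1 → B i j = 1) → C = 0 ∨ C = B

/-- The Terwilliger algebra of a scheme with respect to the base point `x`. -/
noncomputable def terwAlg (B : AssocScheme Z) (x : Z) : Subalgebra ℂ (Matrix Z Z ℂ) :=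
  Algebra.adjoin ℂ
    ({M | ∃ s ∈ B.rels, M = adjMat s} ∪ {M | ∃ s ∈ B.rels, M = eps (pointFiber x s)})

/-- A central primitive idempotent of a (set underlying a) matrix algebra: a nonzero
central idempotent that is not the sum of two nonzero orthogonal central idempotents. -/
def IsCPI {n : Type*} [Fintype n] [DecidableEq n] (𝒜 : Set (Matrix n n ℂ))
    (e : Matrix n n ℂ) : Prop :=
  e ∈ 𝒜 ∧ e ≠ 0 ∧ e * e = e ∧ (∀ a ∈ 𝒜, a * e = e * a) ∧
  ¬∃ f g : Matrix n n ℂ, f ∈ 𝒜 ∧ g ∈ 𝒜 ∧ f ≠ 0 ∧ g ≠ 0 ∧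
    f * f = f ∧ g * g = g ∧ (∀ a ∈ 𝒜, a * f = f * a) ∧ (∀ a ∈ 𝒜, a * g = g * a) ∧
    f * g = 0 ∧ g * f = 0 ∧ e = f + g

/-- The trivial central primitive idempotent
`∑_{s∈S} n_s⁻¹ ε_{x s} J ε_{x s}` of the Terwilliger algebra. -/
noncomputable def trivTerwIdem (B : AssocScheme Z) (x : Z) : Matrix Z Z ℂ :=
  ∑ s ∈ B.rels, ((valency s : ℂ)⁻¹) •
    (eps (pointFiber x s) * allOnes Z * eps (pointFiber x s))

/-- The adjacency algebra `A(S) = span{σ_s : s ∈ S}` as a set of matrices. -/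
def adjAlgSet (B : AssocScheme Z) : Set (Matrix Z Z ℂ) :=
  ↑(Submodule.span ℂ {M | ∃ s ∈ B.rels, M = adjMat s})

end Defs

section Wreath

variable {X Y : Type*} [Fintype X] [DecidableEq X] [Fintype Y] [DecidableEq Y]

/-- Generators of the Terwilliger algebra of the wreath product at `(x₀, y₀)`. -/
def wreathGens (A : AssocScheme X) (B : AssocScheme Y) (x₀ : X) (y₀ : Y) :
    Set (Matrix (X × Y) (X × Y) ℂ) :=
  {M | ∃ s ∈ A.rels, M = adjMat s ⊗ₖ (1 : Matrix Y Y ℂ)} ∪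
  {M | ∃ s ∈ A.rels, M = eps (pointFiber x₀ s) ⊗ₖ eps ({y₀} : Finset Y)} ∪
  {M | ∃ t ∈ B.rels, t ≠ diagRel Y ∧ M = allOnes X ⊗ₖ adjMat t} ∪
  {M | ∃ t ∈ B.rels, t ≠ diagRel Y ∧ M = (1 : Matrix X X ℂ) ⊗ₖ eps (pointFiber y₀ t)}

/-- The Terwilliger algebra of the wreath product at `(x₀, y₀)`. -/
noncomputable def wreathTerw (A : AssocScheme X) (B : AssocScheme Y) (x₀ : X) (y₀ : Y) :
    Subalgebra ℂ (Matrix (X × Y) (X × Y) ℂ) :=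
  Algebra.adjoin ℂ (wreathGens A B x₀ y₀)

/-- The relation `s̃` of the wreath product coming from `s ∈ S`. -/
def tildeRel (s : Finset (X × X)) : Finset ((X × Y) × (X × Y)) :=
  Finset.univ.filter fun p => (p.1.1, p.2.1) ∈ s ∧ p.1.2 = p.2.2

/-- The relation `t̄` of the wreath product coming from `t ∈ T \ {1}`. -/
def barRel (t : Finset (Y × Y)) : Finset ((X × Y) × (X × Y)) :=
  Finset.univ.filter fun p => (p.1.2, p.2.2) ∈ t

/-- The basic relations of the wreath product `S ≀ T`. -/
def wreathRels (A : AssocScheme X) (B : AssocScheme Y) :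
    Finset (Finset ((X × Y) × (X × Y))) :=
  A.rels.image (tildeRel (Y := Y)) ∪ (B.rels.erase (diagRel Y)).image (barRel (X := X))

/-- The trivial central primitive idempotent
`e₀ = ∑_u n_u⁻¹ ε_{(x₀,y₀)u} J ε_{(x₀,y₀)u}` of `T(S ≀ T)`. -/
noncomputable def wreathTriv (A : AssocScheme X) (B : AssocScheme Y) (x₀ : X) (y₀ : Y) :
    Matrix (X × Y) (X × Y) ℂ :=
  ∑ u ∈ wreathRels A B, ((valency u : ℂ)⁻¹) •
    (eps (pointFiber (x₀, y₀) u) * allOnes (X × Y) * eps (pointFiber (x₀, y₀) u))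

/-- `ω = e^{2πi/3}`. -/
noncomputable def omega3 : ℂ := Complex.exp (2 * Real.pi * Complex.I / 3)

/-- The shifted matching matrix `∑_i E_{y_{t(i)}, y_{t'(i+k)}}` on `y₀t × y₀t'`. -/
noncomputable def cyc (enum : Finset (Y × Y) → Fin 3 → Y) (t t' : Finset (Y × Y))
    (k : Fin 3) : Matrix Y Y ℂ :=
  ∑ i : Fin 3, Matrix.single (enum t i) (enum t' (i + k)) 1

/-- `G_{y₀t, y₀t'}`. -/
noncomputable def Gmat (X : Type*) [Fintype X] (enum : Finset (Y × Y) → Fin 3 → Y)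
    (t t' : Finset (Y × Y)) : Matrix (X × Y) (X × Y) ℂ :=
  ((3 * (Fintype.card X : ℂ))⁻¹) •
    (allOnes X ⊗ₖ (cyc enum t t' 0 + omega3 • cyc enum t t' 1 + omega3 ^ 2 • cyc enum t t' 2))

/-- `G'_{y₀t, y₀t'}`. -/
noncomputable def Gmat' (X : Type*) [Fintype X] (enum : Finset (Y × Y) → Fin 3 → Y)
    (t t' : Finset (Y × Y)) : Matrix (X × Y) (X × Y) ℂ :=
  ((3 * (Fintype.card X : ℂ))⁻¹) •
    (allOnes X ⊗ₖ (cyc enum t t' 0 + omega3 ^ 2 • cyc enum t t' 1 + omega3 • cyc enum t t' 2))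

/-- `enum` enumerates each set `y₀t` (for non-identity `t`) by `Fin 3`. -/
def IsEnum (B : AssocScheme Y) (y₀ : Y) (enum : Finset (Y × Y) → Fin 3 → Y) : Prop :=
  ∀ t ∈ B.rels, t ≠ diagRel Y →
    Function.Injective (enum t) ∧ ∀ y, y ∈ pointFiber y₀ t ↔ ∃ i, enum t i = y

/-- The enumerations are well-ordering: every basic relation matrix of the
one-point-extension algebra which is nonzero on `y₀t × y₀t'` restricts there to one of
the cyclic permutation matrices `I, C, C²`. -/
def IsWellOrdering (B : AssocScheme Y) (y₀ : Y) (enum : Finset (Y × Y) → Fin 3 → Y) : Prop :=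
  IsEnum B y₀ enum ∧
  ∀ t ∈ B.rels, t ≠ diagRel Y → ∀ t' ∈ B.rels, t' ≠ diagRel Y →
    ∀ M : Matrix Y Y ℂ, IsBasicMatrix (onePointAlg B y₀) M →
      (∃ i j : Fin 3, M (enum t i) (enum t' j) ≠ 0) →
      ∃ k : Fin 3, ∀ i j : Fin 3,
        M (enum t i) (enum t' j) = if j = i + k then 1 else 0

/-- The set of all matrices `G_{y₀t, y₀t'}`, `t, t' ∈ T₃`. -/
noncomputable def GmatSet (X : Type*) [Fintype X] (B : AssocScheme Y)
    (enum : Finset (Y × Y) → Fin 3 → Y) : Set (Matrix (X × Y) (X × Y) ℂ) :=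
  {M | ∃ t ∈ B.rels.erase (diagRel Y), ∃ t' ∈ B.rels.erase (diagRel Y), M = Gmat X enum t t'}

/-- The set of all matrices `G'_{y₀t, y₀t'}`, `t, t' ∈ T₃`. -/
noncomputable def GmatSet' (X : Type*) [Fintype X] (B : AssocScheme Y)
    (enum : Finset (Y × Y) → Fin 3 → Y) : Set (Matrix (X × Y) (X × Y) ℂ) :=
  {M | ∃ t ∈ B.rels.erase (diagRel Y), ∃ t' ∈ B.rels.erase (diagRel Y), M = Gmat' X enum t t'}

/-- `e_{η1} = ∑_{t ∈ T₃} G_{y₀t, y₀t}`. -/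
noncomputable def etaOne (X : Type*) [Fintype X] (B : AssocScheme Y)
    (enum : Finset (Y × Y) → Fin 3 → Y) : Matrix (X × Y) (X × Y) ℂ :=
  ∑ t ∈ B.rels.erase (diagRel Y), Gmat X enum t t

/-- `e_{η2} = ∑_{t ∈ T₃} G'_{y₀t, y₀t}`. -/
noncomputable def etaTwo (X : Type*) [Fintype X] (B : AssocScheme Y)
    (enum : Finset (Y × Y) → Fin 3 → Y) : Matrix (X × Y) (X × Y) ℂ :=
  ∑ t ∈ B.rels.erase (diagRel Y), Gmat' X enum t t

end Wreath

/-!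
Counting paths of length two gives `σ_u σ_{u*} = 3 σ_1 + ∑_{w ∈ T₃} p_w σ_w` with
`p_w = p_{u u*}^w`, `∑_{w ∈ T₃} p_w = 2` (valencies: `3 + 3 · 2 = 9`) and `p_{w*} = p_w`.
Hence either a single `p_v` equals `2` and `v` is symmetric, or two coefficients equal `1`; these
sit at `v ≠ v*`, because a symmetric `v` with `p_v = 1` is impossible: since `n_v = n_u`, also
`p_{v u}^u = 1`, so `v` would be a perfect matching on each three-element fibre `z u*`, against
the handshake lemma.

If `p_v = 2` and `v ≠ u`, then any two points with a common `u`-successor are `v`-related, so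
the fibres `z u*` are `v`-triangles. Take a triangle `{a, y, y'}` and a `u`-successor `c'` of `y`
that is not one of `a` (it exists as `p_v < 3`). Counting valencies for `σ_v σ_u` shows that at
most one `v`-neighbour of `a` precedes `c'`, so the triangle `c' u*` meets the first one only in
`y`, and `y` gets four `v`-neighbours.
-/

open Finset

namespace AssocScheme

section Relations

variable {Z : Type*} [DecidableEq Z]

lemma mem_convRel {s : Finset (Z × Z)} {a b : Z} : (a, b) ∈ convRel s ↔ (b, a) ∈ s := by
  simp [convRel]

lemma convRel_convRel (s : Finset (Z × Z)) : convRel (convRel s) = s := by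
  ext ⟨a, b⟩
  simp [mem_convRel]

end Relations

variable {Z : Type*} [Fintype Z] [DecidableEq Z]

lemma mem_diagRel {a b : Z} : (a, b) ∈ diagRel Z ↔ a = b := by
  simp [diagRel]

lemma convRel_diagRel : convRel (diagRel Z) = diagRel Z := by
  ext ⟨a, b⟩
  simp [mem_convRel, mem_diagRel, eq_comm]

lemma convRel_ne_diagRel {w : Finset (Z × Z)} (h : w ≠ diagRel Z) : convRel w ≠ diagRel Z :=
  fun hc => h (by rw [← convRel_convRel w, hc, convRel_diagRel])

lemma mem_pointFiber {x y : Z} {s : Finset (Z × Z)} : y ∈ pointFiber x s ↔ (x, y) ∈ s := by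
  simp [pointFiber]

lemma valency_diagRel [Nonempty Z] : valency (diagRel Z) = 1 := by
  obtain ⟨a⟩ := ‹Nonempty Z›
  have hne : (diagRel Z).Nonempty := ⟨(a, a), mem_diagRel.mpr rfl⟩
  have hc : hne.choose.1 = hne.choose.2 := mem_diagRel.mp hne.choose_spec
  rw [valency, pNum, dif_pos hne, convRel_diagRel]
  simp only [mem_diagRel, hc]
  exact card_eq_one.mpr ⟨hne.choose.2, by ext; simp [eq_comm]⟩

def pathCount (s t : Finset (Z × Z)) (a b : Z) : ℕ :=
  #{z | (a, z) ∈ s ∧ (z, b) ∈ t}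

lemma pathCount_eq_sum (s t : Finset (Z × Z)) (a b : Z) :
    pathCount s t a b = ∑ z, if (a, z) ∈ s ∧ (z, b) ∈ t then 1 else 0 :=
  card_filter _ _

lemma pathCount_convRel_comm (s : Finset (Z × Z)) (a b : Z) :
    pathCount s (convRel s) a b = pathCount s (convRel s) b a := by
  simp only [pathCount, mem_convRel, and_comm]

lemma adjMat_mul_apply (s t : Finset (Z × Z)) (a b : Z) :
    (adjMat s * adjMat t) a b = pathCount s t a b := by
  simp only [Matrix.mul_apply, adjMat, Matrix.of_apply, pathCount_eq_sum, mul_boole, ← ite_and]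
  push_cast
  exact sum_congr rfl fun z _ => if_congr and_comm rfl rfl

variable (B : AssocScheme Z)

lemma eq_of_mem_of_mem {w w' : Finset (Z × Z)} (hw : w ∈ B.rels) (hw' : w' ∈ B.rels)
    {p : Z × Z} (h : p ∈ w) (h' : p ∈ w') : w = w' := by
  by_contra hne
  exact disjoint_left.mp (B.pairwise_disjoint w hw w' hw' hne) h h'

lemma notMem_of_ne_diagRel {w : Finset (Z × Z)} (hw : w ∈ B.rels) (h : w ≠ diagRel Z)
    (a : Z) : (a, a) ∉ w := fun hm =>
  h (B.eq_of_mem_of_mem hw B.id_mem hm (mem_diagRel.mpr rfl))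

noncomputable def relOf (a b : Z) : Finset (Z × Z) := (B.cover (a, b)).choose

lemma relOf_mem (a b : Z) : B.relOf a b ∈ B.rels := (B.cover (a, b)).choose_spec.1

lemma mem_relOf (a b : Z) : (a, b) ∈ B.relOf a b := (B.cover (a, b)).choose_spec.2

lemma relOf_eq_iff {w : Finset (Z × Z)} (hw : w ∈ B.rels) {a b : Z} :
    B.relOf a b = w ↔ (a, b) ∈ w :=
  ⟨fun h => h ▸ B.mem_relOf a b, B.eq_of_mem_of_mem (B.relOf_mem a b) hw (B.mem_relOf a b)⟩

lemma pNum_eq_pathCount {s t w : Finset (Z × Z)} (hs : s ∈ B.rels) (ht : t ∈ B.rels)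
    (hw : w ∈ B.rels) {a b : Z} (h : (a, b) ∈ w) : pNum s t w = pathCount s t a b := by
  have hne : w.Nonempty := ⟨(a, b), h⟩
  rw [pNum, dif_pos hne]
  exact B.pconst s hs t ht w hw _ hne.choose_spec (a, b) h

lemma card_pointFiber {s : Finset (Z × Z)} (hs : s ∈ B.rels) (a : Z) :
    #(pointFiber a s) = valency s := by
  rw [valency, B.pNum_eq_pathCount hs (B.conv_mem s hs) B.id_mem
    (mem_diagRel.mpr rfl : (a, a) ∈ diagRel Z)]
  simp [pathCount, pointFiber, mem_convRel]

lemma sum_pathCount_pointFiber {s t w : Finset (Z × Z)} (hs : s ∈ B.rels) (ht : t ∈ B.rels)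
    (hw : w ∈ B.rels) (a : Z) :
    ∑ b ∈ pointFiber a w, pathCount s t a b = valency w * pNum s t w := by
  rw [sum_congr rfl fun b hb => (B.pNum_eq_pathCount hs ht hw (mem_pointFiber.mp hb)).symm,
    sum_const, B.card_pointFiber hw, smul_eq_mul]

lemma sum_pathCount {s t : Finset (Z × Z)} (hs : s ∈ B.rels) (ht : t ∈ B.rels) (a : Z) :
    ∑ b, pathCount s t a b = valency s * valency t :=
  calc ∑ b, pathCount s t a b = ∑ z ∈ pointFiber a s, #(pointFiber z t) := by
        simp only [pathCount_eq_sum, ite_and]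
        rw [sum_comm]
        simp [pointFiber, sum_filter]
    _ = valency s * valency t := by
        rw [sum_congr rfl fun z _ => B.card_pointFiber ht z, sum_const, B.card_pointFiber hs,
          smul_eq_mul]

lemma sum_valency_mul_pNum [Nonempty Z] {s t : Finset (Z × Z)} (hs : s ∈ B.rels)
    (ht : t ∈ B.rels) : ∑ w ∈ B.rels, valency w * pNum s t w = valency s * valency t := by
  obtain ⟨a⟩ := ‹Nonempty Z›
  rw [← B.sum_pathCount hs ht a,
    ← sum_fiberwise_of_maps_to (g := B.relOf a) fun b _ => B.relOf_mem a b]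
  refine sum_congr rfl fun w hw => ?_
  rw [← B.sum_pathCount_pointFiber hs ht hw a]
  congr 1
  ext b
  simp [pointFiber, B.relOf_eq_iff hw]

/-- Both sides count the pairs `(b, z)` with `(a, b) ∈ w`, `(a, z) ∈ s` and `(b, z) ∈ s`. -/
lemma valency_mul_pNum_convRel [Nonempty Z] {s w : Finset (Z × Z)} (hs : s ∈ B.rels)
    (hw : w ∈ B.rels) : valency w * pNum s (convRel s) w = valency s * pNum w s s := by
  obtain ⟨a⟩ := ‹Nonempty Z›
  rw [← B.sum_pathCount_pointFiber hs (B.conv_mem s hs) hw a,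
    ← B.sum_pathCount_pointFiber hw hs hs a]
  convert sum_card_bipartiteAbove_eq_sum_card_bipartiteBelow (s := pointFiber a w)
    (t := pointFiber a s) (fun b z => (b, z) ∈ s) using 2 <;>
  · unfold pathCount
    congr 1
    ext
    simp [bipartiteAbove, bipartiteBelow, pointFiber, mem_convRel]

lemma pNum_convRel_convRel {s w : Finset (Z × Z)} (hs : s ∈ B.rels) (hw : w ∈ B.rels) :
    pNum s (convRel s) (convRel w) = pNum s (convRel s) w := by
  obtain ⟨⟨a, b⟩, hab⟩ := B.nonempty_mem w hw
  rw [B.pNum_eq_pathCount hs (B.conv_mem s hs) hw hab,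
    B.pNum_eq_pathCount hs (B.conv_mem s hs) (B.conv_mem w hw) (mem_convRel.mpr hab),
    pathCount_convRel_comm]

lemma adjMat_mul_adjMat {s t : Finset (Z × Z)} (hs : s ∈ B.rels) (ht : t ∈ B.rels) :
    adjMat s * adjMat t = ∑ w ∈ B.rels, (pNum s t w : ℂ) • adjMat w := by
  ext a b
  rw [adjMat_mul_apply, Matrix.sum_apply, sum_eq_single (B.relOf a b)]
  · simp [adjMat, B.mem_relOf, B.pNum_eq_pathCount hs ht (B.relOf_mem a b) (B.mem_relOf a b)]
  · intro w hw hne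
    simp [adjMat, ← B.relOf_eq_iff hw, Ne.symm hne]
  · exact fun h => absurd (B.relOf_mem a b) h

lemma adjMat_add_adjMat_convRel_ne_two_smul {w : Finset (Z × Z)} (hw : w ∈ B.rels)
    (hne : w ≠ convRel w) (x : Finset (Z × Z)) :
    adjMat w + adjMat (convRel w) ≠ (2 : ℂ) • adjMat x := by
  obtain ⟨⟨a, b⟩, hab⟩ := B.nonempty_mem w hw
  have hab' : (a, b) ∉ convRel w := fun h => hne (B.eq_of_mem_of_mem hw (B.conv_mem w hw) hab h)
  intro h
  have hentry := congrFun (congrFun h a) b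
  simp only [Matrix.add_apply, Matrix.smul_apply, adjMat, Matrix.of_apply, if_pos hab,
    if_neg hab'] at hentry
  split_ifs at hentry <;> norm_num at hentry

end AssocScheme

lemma even_sum_card_filter_of_symm {V : Type*} [Fintype V] (r : V → V → Prop)
    [DecidableRel r] (hsymm : ∀ x y, r x y → r y x) (hirr : ∀ x, ¬r x x) :
    Even (∑ x, #{y | r x y}) := by
  let G : SimpleGraph V := { Adj := r, symm := ⟨hsymm⟩, loopless := ⟨hirr⟩ }
  have h := G.sum_degrees_eq_twice_card_edges
  simp only [SimpleGraph.degree, SimpleGraph.neighborFinset_eq_filter] at h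
  exact h ▸ even_two_mul _

namespace ThreeEquivalenced

open AssocScheme

variable {Z : Type*} [Fintype Z] [DecidableEq Z] {B : AssocScheme Z}

lemma nonempty (hB : ThreeEquivalenced B) : Nonempty Z :=
  Fintype.card_pos_iff.mp (by have := hB.1; omega)

lemma pNum_diagRel_add_three_mul_sum (hB : ThreeEquivalenced B) {s t : Finset (Z × Z)}
    (hs : s ∈ B.rels) (hsd : s ≠ diagRel Z) (ht : t ∈ B.rels) (htd : t ≠ diagRel Z) :
    pNum s t (diagRel Z) + 3 * ∑ w ∈ B.rels.erase (diagRel Z), pNum s t w = 9 := by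
  have := hB.nonempty
  have h := B.sum_valency_mul_pNum hs ht
  rw [← add_sum_erase _ _ B.id_mem, valency_diagRel, one_mul, hB.2 s hs hsd, hB.2 t ht htd,
    sum_congr rfl fun w hw => by rw [hB.2 w (mem_of_mem_erase hw) (ne_of_mem_erase hw)],
    ← mul_sum] at h
  exact h

lemma sum_pNum_convRel_eq_two (hB : ThreeEquivalenced B) {u : Finset (Z × Z)}
    (hu : u ∈ B.rels) (hud : u ≠ diagRel Z) :
    ∑ w ∈ B.rels.erase (diagRel Z), pNum u (convRel u) w = 2 := by
  have h := hB.pNum_diagRel_add_three_mul_sum hu hud (B.conv_mem u hu) (convRel_ne_diagRel hud)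
  rw [← valency, hB.2 u hu hud] at h
  omega

lemma pNum_eq_pNum_convRel (hB : ThreeEquivalenced B) {u v : Finset (Z × Z)}
    (hu : u ∈ B.rels) (hud : u ≠ diagRel Z) (hv : v ∈ B.rels.erase (diagRel Z)) :
    pNum v u u = pNum u (convRel u) v := by
  have := hB.nonempty
  have h := B.valency_mul_pNum_convRel hu (mem_of_mem_erase hv)
  rw [hB.2 u hu hud, hB.2 v (mem_of_mem_erase hv) (ne_of_mem_erase hv)] at h
  omega

lemma pNum_eq_zero_of_sum_eq_two (hB : ThreeEquivalenced B) {u : Finset (Z × Z)}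
    (hu : u ∈ B.rels) (hud : u ≠ diagRel Z) {T : Finset (Finset (Z × Z))}
    (hT : T ⊆ B.rels.erase (diagRel Z)) (hsum : ∑ w ∈ T, pNum u (convRel u) w = 2)
    {w : Finset (Z × Z)} (hw : w ∈ B.rels.erase (diagRel Z)) (hwT : w ∉ T) :
    pNum u (convRel u) w = 0 := by
  have h := sum_sdiff hT (f := pNum u (convRel u))
  rw [hsum, hB.sum_pNum_convRel_eq_two hu hud] at h
  exact sum_eq_zero_iff.mp (by omega) w (mem_sdiff.mpr ⟨hw, hwT⟩)

lemma adjMat_mul_adjMat_convRel (hB : ThreeEquivalenced B) {u : Finset (Z × Z)}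
    (hu : u ∈ B.rels) (hud : u ≠ diagRel Z) {T : Finset (Finset (Z × Z))}
    (hT : T ⊆ B.rels.erase (diagRel Z)) (hsum : ∑ w ∈ T, pNum u (convRel u) w = 2) :
    adjMat u * adjMat (convRel u) =
      (3 : ℂ) • adjMat (diagRel Z) + ∑ w ∈ T, (pNum u (convRel u) w : ℂ) • adjMat w := by
  rw [B.adjMat_mul_adjMat hu (B.conv_mem u hu), ← add_sum_erase _ _ B.id_mem, ← valency,
    hB.2 u hu hud, sum_subset hT fun w hw hwT => by
      rw [hB.pNum_eq_zero_of_sum_eq_two hu hud hT hsum hw hwT, Nat.cast_zero, zero_smul]]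
  norm_num

lemma pNum_convRel_ne_one (hB : ThreeEquivalenced B) {u v : Finset (Z × Z)} (hu : u ∈ B.rels)
    (hud : u ≠ diagRel Z) (hv : v ∈ B.rels.erase (diagRel Z)) (hvs : convRel v = v) :
    pNum u (convRel u) v ≠ 1 := by
  intro h1
  obtain ⟨c⟩ := hB.nonempty
  set S := pointFiber c (convRel u)
  have hmemS {y : Z} : y ∈ S ↔ (y, c) ∈ u := by simp [S, mem_pointFiber, mem_convRel]
  have heven := even_sum_card_filter_of_symm (fun y y' => y ∈ S ∧ y' ∈ S ∧ (y, y') ∈ v)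
    (fun y y' ⟨hy, hy', h⟩ => ⟨hy', hy, hvs ▸ mem_convRel.mpr h⟩)
    (fun y ⟨_, _, h⟩ => B.notMem_of_ne_diagRel (mem_of_mem_erase hv) (ne_of_mem_erase hv) y h)
  have hdeg : ∀ y ∈ S, #{y' | y ∈ S ∧ y' ∈ S ∧ (y, y') ∈ v} = 1 := by
    intro y hy
    rw [← h1, ← hB.pNum_eq_pNum_convRel hu hud hv,
      B.pNum_eq_pathCount (mem_of_mem_erase hv) hu hu (hmemS.mp hy), pathCount]
    congr 1
    ext y'
    simp [hy, hmemS, and_comm]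
  have hsum : ∑ y, #{y' | y ∈ S ∧ y' ∈ S ∧ (y, y') ∈ v} = 3 := by
    rw [← sum_subset (subset_univ S) fun y _ hy => by simp [hy], sum_congr rfl hdeg, sum_const,
      B.card_pointFiber (B.conv_mem u hu), hB.2 _ (B.conv_mem u hu) (convRel_ne_diagRel hud)]
    rfl
  rw [hsum] at heven
  exact absurd heven (by decide)

lemma pNum_eq_zero_of_pNum_eq_two (hB : ThreeEquivalenced B) {u v : Finset (Z × Z)}
    (hu : u ∈ B.rels) (hud : u ≠ diagRel Z) (hv : v ∈ B.rels.erase (diagRel Z))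
    (h2 : pNum u (convRel u) v = 2) {w : Finset (Z × Z)} (hw : w ∈ B.rels.erase (diagRel Z))
    (hwv : w ≠ v) : pNum u (convRel u) w = 0 :=
  hB.pNum_eq_zero_of_sum_eq_two hu hud (singleton_subset_iff.mpr hv) (by simpa using h2) hw
    (by simpa using hwv)

lemma convRel_eq_self_of_pNum_eq_two (hB : ThreeEquivalenced B) {u v : Finset (Z × Z)}
    (hu : u ∈ B.rels) (hud : u ≠ diagRel Z) (hv : v ∈ B.rels.erase (diagRel Z))
    (h2 : pNum u (convRel u) v = 2) : convRel v = v := by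
  by_contra hne
  have hv' : convRel v ∈ B.rels.erase (diagRel Z) :=
    mem_erase.mpr ⟨convRel_ne_diagRel (ne_of_mem_erase hv), B.conv_mem v (mem_of_mem_erase hv)⟩
  have h := hB.pNum_eq_zero_of_pNum_eq_two hu hud hv h2 hv' hne
  rw [B.pNum_convRel_convRel hu (mem_of_mem_erase hv), h2] at h
  omega

lemma mem_of_pNum_eq_two (hB : ThreeEquivalenced B) {u v : Finset (Z × Z)}
    (hu : u ∈ B.rels) (hud : u ≠ diagRel Z) (hv : v ∈ B.rels.erase (diagRel Z))
    (h2 : pNum u (convRel u) v = 2) ⦃y y' c : Z⦄ (hy : (y, c) ∈ u) (hy' : (y', c) ∈ u)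
    (hne : y ≠ y') : (y, y') ∈ v := by
  have hr : B.relOf y y' ∈ B.rels.erase (diagRel Z) :=
    mem_erase.mpr ⟨fun h => hne (mem_diagRel.mp (h ▸ B.mem_relOf y y')), B.relOf_mem y y'⟩
  have hpos : pNum u (convRel u) (B.relOf y y') ≠ 0 := by
    rw [B.pNum_eq_pathCount hu (B.conv_mem u hu) (B.relOf_mem y y') (B.mem_relOf y y')]
    exact (card_pos.mpr ⟨c, by simp [mem_convRel, hy, hy']⟩).ne'
  by_contra hyv
  exact hpos (hB.pNum_eq_zero_of_pNum_eq_two hu hud hv h2 hr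
    fun h => hyv ((B.relOf_eq_iff (mem_of_mem_erase hv)).mp h))

lemma pathCount_le_one_of_pNum_eq_two (hB : ThreeEquivalenced B) {u v : Finset (Z × Z)}
    (hu : u ∈ B.rels) (hud : u ≠ diagRel Z) (hv : v ∈ B.rels.erase (diagRel Z))
    (h2 : pNum u (convRel u) v = 2) (hvu : v ≠ u) ⦃a c : Z⦄ (hac : (a, c) ∉ u) :
    pathCount v u a c ≤ 1 := by
  have hvs := hB.convRel_eq_self_of_pNum_eq_two hu hud hv h2
  have hdiag : pNum v u (diagRel Z) = 0 := by
    rw [B.pNum_eq_pathCount (mem_of_mem_erase hv) hu B.id_mem (mem_diagRel.mpr rfl : (a, a) ∈ _),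
      pathCount, card_eq_zero, filter_eq_empty_iff]
    rintro z - ⟨haz, hza⟩
    exact hvu (B.eq_of_mem_of_mem (mem_of_mem_erase hv) hu (hvs ▸ mem_convRel.mpr haz) hza)
  have hbudget := hB.pNum_diagRel_add_three_mul_sum (mem_of_mem_erase hv) (ne_of_mem_erase hv)
    hu hud
  rw [hdiag, ← add_sum_erase _ _ (mem_erase.mpr ⟨hud, hu⟩), hB.pNum_eq_pNum_convRel hu hud hv,
    h2] at hbudget
  rw [← B.pNum_eq_pathCount (mem_of_mem_erase hv) hu (B.relOf_mem a c) (B.mem_relOf a c)]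
  by_cases hr : B.relOf a c = diagRel Z
  · rw [hr, hdiag]
    exact zero_le_one
  have hr' : B.relOf a c ∈ (B.rels.erase (diagRel Z)).erase u :=
    mem_erase.mpr ⟨fun h => hac (h ▸ B.mem_relOf a c), mem_erase.mpr ⟨hr, B.relOf_mem a c⟩⟩
  have := single_le_sum (fun w _ => Nat.zero_le (pNum v u w)) hr'
  omega

lemma disjoint_erase_pointFiber_of_pNum_eq_two (hB : ThreeEquivalenced B)
    {u v : Finset (Z × Z)} (hu : u ∈ B.rels) (hud : u ≠ diagRel Z)
    (hv : v ∈ B.rels.erase (diagRel Z)) (h2 : pNum u (convRel u) v = 2) (hvu : v ≠ u)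
    {a y c c' : Z} (hac : (a, c) ∈ u) (hay : (a, y) ∈ v) (hyc' : (y, c') ∈ u)
    (hac' : (a, c') ∉ u) :
    Disjoint ((pointFiber c (convRel u)).erase y) ((pointFiber c' (convRel u)).erase y) := by
  refine disjoint_left.mpr fun x hx hx' => ?_
  simp only [mem_erase, mem_pointFiber, mem_convRel] at hx hx'
  have hxa : x ≠ a := fun h => hac' (h ▸ hx'.2)
  have hax : (a, x) ∈ v := hB.mem_of_pNum_eq_two hu hud hv h2 hac hx.2 hxa.symm
  have h2le : 2 ≤ pathCount v u a c' := by
    rw [← card_pair hx.1.symm]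
    refine card_le_card fun z hz => ?_
    rcases mem_insert.mp hz with rfl | hz
    · simp [hay, hyc']
    · simp [mem_singleton.mp hz, hax, hx'.2]
  have := hB.pathCount_le_one_of_pNum_eq_two hu hud hv h2 hvu hac'
  omega

lemma eq_of_pNum_eq_two (hB : ThreeEquivalenced B) {u v : Finset (Z × Z)} (hu : u ∈ B.rels)
    (hud : u ≠ diagRel Z) (hv : v ∈ B.rels.erase (diagRel Z)) (h2 : pNum u (convRel u) v = 2) :
    v = u := by
  by_contra hvu
  have hclique := hB.mem_of_pNum_eq_two hu hud hv h2
  have hmem {x d : Z} : x ∈ pointFiber d (convRel u) ↔ (x, d) ∈ u := by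
    simp [mem_pointFiber, mem_convRel]
  have hcard (d : Z) : #(pointFiber d (convRel u)) = 3 := by
    rw [B.card_pointFiber (B.conv_mem u hu), hB.2 _ (B.conv_mem u hu) (convRel_ne_diagRel hud)]
  have hsub {y d : Z} (hyd : (y, d) ∈ u) : (pointFiber d (convRel u)).erase y ⊆ pointFiber y v :=
    fun x hx => mem_pointFiber.mpr
      (hclique hyd (hmem.mp (mem_of_mem_erase hx)) (ne_of_mem_erase hx).symm)
  obtain ⟨⟨a, c⟩, hac⟩ := B.nonempty_mem u hu
  obtain ⟨y, hyc, hya⟩ :=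
    exists_mem_ne (s := pointFiber c (convRel u)) (by rw [hcard]; omega) a
  replace hyc : (y, c) ∈ u := hmem.mp hyc
  have hay : (a, y) ∈ v := hclique hac hyc (Ne.symm hya)
  have hlt : #{z | (a, z) ∈ u ∧ (z, y) ∈ convRel u} < #(pointFiber y u) := by
    rw [← pathCount, ← B.pNum_eq_pathCount hu (B.conv_mem u hu) (mem_of_mem_erase hv) hay, h2,
      B.card_pointFiber hu, hB.2 u hu hud]
    norm_num
  obtain ⟨c', hyc', hac'⟩ := exists_mem_notMem_of_card_lt_card hlt
  replace hyc' : (y, c') ∈ u := mem_pointFiber.mp hyc'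
  replace hac' : (a, c') ∉ u := fun h => hac' (by simp [h, mem_convRel, hyc'])
  have hdisj := hB.disjoint_erase_pointFiber_of_pNum_eq_two hu hud hv h2 hvu hac hay hyc' hac'
  have := card_le_card (union_subset (hsub hyc) (hsub hyc'))
  rw [card_union_of_disjoint hdisj, card_erase_of_mem (hmem.mpr hyc),
    card_erase_of_mem (hmem.mpr hyc'), hcard, hcard, B.card_pointFiber (mem_of_mem_erase hv),
    hB.2 v (mem_of_mem_erase hv) (ne_of_mem_erase hv)] at this
  omega

lemma adjMat_mul_adjMat_convRel_of_pNum_eq_one (hB : ThreeEquivalenced B)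
    {u v : Finset (Z × Z)} (hu : u ∈ B.rels) (hud : u ≠ diagRel Z)
    (hv : v ∈ B.rels.erase (diagRel Z)) (h1 : pNum u (convRel u) v = 1) :
    v ≠ convRel v ∧ adjMat u * adjMat (convRel u) =
      (3 : ℂ) • adjMat (diagRel Z) + adjMat v + adjMat (convRel v) := by
  have hne : v ≠ convRel v := fun h => hB.pNum_convRel_ne_one hu hud hv h.symm h1
  have h1' : pNum u (convRel u) (convRel v) = 1 := by
    rw [B.pNum_convRel_convRel hu (mem_of_mem_erase hv), h1]
  have hT : {v, convRel v} ⊆ B.rels.erase (diagRel Z) := insert_subset hv <|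
    singleton_subset_iff.mpr <| mem_erase.mpr
      ⟨convRel_ne_diagRel (ne_of_mem_erase hv), B.conv_mem v (mem_of_mem_erase hv)⟩
  refine ⟨hne, ?_⟩
  rw [hB.adjMat_mul_adjMat_convRel hu hud hT (by rw [sum_pair hne, h1, h1']), sum_pair hne, h1,
    h1', Nat.cast_one, one_smul, one_smul, add_assoc]

lemma adjMat_mul_adjMat_convRel_of_pNum_eq_two (hB : ThreeEquivalenced B)
    {u v : Finset (Z × Z)} (hu : u ∈ B.rels) (hud : u ≠ diagRel Z)
    (hv : v ∈ B.rels.erase (diagRel Z)) (h2 : pNum u (convRel u) v = 2) :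
    u = convRel u ∧ adjMat u * adjMat (convRel u) =
      (3 : ℂ) • adjMat (diagRel Z) + (2 : ℂ) • adjMat u := by
  obtain rfl := hB.eq_of_pNum_eq_two hu hud hv h2
  refine ⟨(hB.convRel_eq_self_of_pNum_eq_two hu hud hv h2).symm, ?_⟩
  rw [hB.adjMat_mul_adjMat_convRel hu hud (singleton_subset_iff.mpr hv) (by simpa using h2),
    sum_singleton, h2]
  norm_num

end ThreeEquivalenced

section Statements

variable {X Y : Type*} [Fintype X] [DecidableEq X] [Fintype Y] [DecidableEq Y]

theorem stmt3 (B : AssocScheme Y) (h3 : ThreeEquivalenced B)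
    (u : Finset (Y × Y)) (hu : u ∈ B.rels) (hu1 : u ≠ diagRel Y) :
    Xor'
      (∃ w ∈ B.rels, w ≠ convRel w ∧
        adjMat u * adjMat (convRel u) =
          (3 : ℂ) • adjMat (diagRel Y) + adjMat w + adjMat (convRel w))
      (u = convRel u ∧
        adjMat u * adjMat (convRel u) =
          (3 : ℂ) • adjMat (diagRel Y) + (2 : ℂ) • adjMat u) := by
  have hsum := h3.sum_pNum_convRel_eq_two hu hu1
  obtain ⟨v, hv, hv0⟩ := exists_ne_zero_of_sum_ne_zero (hsum ▸ two_ne_zero)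
  have hexcl {w : Finset (Y × Y)} (hw : w ∈ B.rels) (hne : w ≠ convRel w)
      (hi : adjMat u * adjMat (convRel u) =
        (3 : ℂ) • adjMat (diagRel Y) + adjMat w + adjMat (convRel w))
      (hii : adjMat u * adjMat (convRel u) =
        (3 : ℂ) • adjMat (diagRel Y) + (2 : ℂ) • adjMat u) : False :=
    B.adjMat_add_adjMat_convRel_ne_two_smul hw hne u
      (add_left_cancel (by rw [← add_assoc, ← hi, hii]))
  obtain h1 | h2 : pNum u (convRel u) v = 1 ∨ pNum u (convRel u) v = 2 := by
    have := hsum ▸ single_le_sum (fun w _ => Nat.zero_le (pNum u (convRel u) w)) hv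
    omega
  · obtain ⟨hne, hi⟩ := h3.adjMat_mul_adjMat_convRel_of_pNum_eq_one hu hu1 hv h1
    exact Or.inl ⟨⟨v, mem_of_mem_erase hv, hne, hi⟩, fun ⟨_, hii⟩ =>
      hexcl (mem_of_mem_erase hv) hne hi hii⟩
  · have hii := h3.adjMat_mul_adjMat_convRel_of_pNum_eq_two hu hu1 hv h2
    exact Or.inr ⟨hii, fun ⟨w, hw, hne, hi⟩ => hexcl hw hne hi hii.2⟩

end Statements
end

section
/- Let (X,S) be an association scheme, (Y,T) a 3-equivalenced association scheme with |T| > 2, x₀ ∈ X, y₀ ∈ Y, and fix well-ordering enumerations of the sets y₀t (t ∈ T_3). Then the linear span of {G_{y₀t, y₀t'} : t, t' ∈ T_3} is a two-sided ideal of the Terwilliger algebra T(S≀T) of the wreath product at (x₀,y₀), the matrices G_{y₀t, y₀t'} satisfy G_{y₀t, y₀t'} · G_{y₀t''', y₀t''} = δ_{t', t'''} G_{y₀t, y₀t''}, and the linear map sending G_{y₀t, y₀t'} to the matrix unit E_{t,t'} is an algebra isomorphism from this span onto the full matrix algebra Mat_{T_3}(ℂ). -/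
/-!
Write `v_t = ∑ᵢ ω⁻ⁱ e_{y_{t(i)}}` and `w_t = ∑ᵢ ωⁱ e_{y_{t(i)}}`. Since the entry of
`ε + ω ε̄ + ω² ε̲` at `(y_{t(i)}, y_{t'(j)})` is `ω^{j-i} = ω⁻ⁱ ωʲ`, we get
`G_{y₀t,y₀t'} = (3|X|)⁻¹ J_X ⊗ v_t w_{t'}ᵀ`. As `w_t ⬝ v_{t'} = 3 δ_{t,t'}` and `J_X² = |X| J_X`,
the `G`'s form a system of matrix units; this gives the multiplication rule and, through the
trace pairing, the isomorphism of their span with `Mat_{T₃}(ℂ)`.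

For the ideal property it suffices to multiply by the generators. Their `X`-parts act on `J_X`
by scalars (valencies are constant), except for `ε_{x₀s} ⊗ ε_{{y₀}}`, which kills `G` because
`v_t` and `w_t` vanish at `y₀`. Their `Y`-parts map `v_t` into the span of the `v_u`, and `w_t`
into that of the `w_u`. For `σ_s` this is where the well-ordering enters: every 0/1 matrix of
`A(T_{y₀})` is a sum of basic relation matrices, each of which is a cyclic permutation matrix
(or zero) on every block `y₀u × y₀t`. Hence `σ_s` commutes with the cyclic shift on these blocks
and maps the shift eigenvector `v_t` to a combination of the eigenvectors `v_u` with the same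
eigenvalue; the entry at `y₀` vanishes because `∑ᵢ ωⁱ = 0`.
-/

open Matrix BigOperators Kronecker
open scoped Classical

lemma omega3_isPrimitiveRoot : IsPrimitiveRoot omega3 3 := by
  simpa [omega3] using Complex.isPrimitiveRoot_exp 3 (by norm_num)

noncomputable def omegaChar : AddChar (Fin 3) ℂ where
  toFun k := omega3 ^ (k : ℕ)
  map_zero_eq_one' := by simp
  map_add_eq_mul' a b := by
    rw [Fin.val_add, ← pow_eq_pow_mod _ omega3_isPrimitiveRoot.pow_eq_one, pow_add]

lemma omegaChar_ne_one : omegaChar ≠ 1 := by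
  rw [AddChar.ne_one_iff]
  exact ⟨1, by simpa [omegaChar] using omega3_isPrimitiveRoot.ne_one (by norm_num)⟩

section Relations

variable {Z : Type*}

lemma mem_convRel_iff [DecidableEq Z] {x y : Z} {s : Finset (Z × Z)} :
    (x, y) ∈ convRel s ↔ (y, x) ∈ s := by
  simp [convRel]

lemma adjMat_transpose [DecidableEq Z] (s : Finset (Z × Z)) :
    (adjMat s)ᵀ = adjMat (convRel s) := by
  ext x y
  simp [adjMat, mem_convRel_iff]

lemma allOnes_transpose : (allOnes Z)ᵀ = allOnes Z := rfl

lemma eps_transpose [DecidableEq Z] (U : Finset Z) : (eps U)ᵀ = eps U :=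
  diagonal_transpose _

lemma isZeroOne_adjMat [DecidableEq Z] (s : Finset (Z × Z)) : IsZeroOne (adjMat s) := by
  intro x y
  by_cases h : (x, y) ∈ s <;> simp [adjMat, h]

lemma allOnes_mul_allOnes [Fintype Z] :
    allOnes Z * allOnes Z = (Fintype.card Z : ℂ) • allOnes Z := by
  ext x y
  simp [allOnes, mul_apply]

lemma trace_allOnes [Fintype Z] : trace (allOnes Z) = Fintype.card Z := by
  simp [trace, allOnes]

variable [Fintype Z] [DecidableEq Z]

lemma mem_pointFiber_iff {x y : Z} {s : Finset (Z × Z)} :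
    y ∈ pointFiber x s ↔ (x, y) ∈ s := by
  simp [pointFiber]

lemma adjMat_mem_onePointAlg {B : AssocScheme Z} {s : Finset (Z × Z)} (hs : s ∈ B.rels)
    (x : Z) : adjMat s ∈ onePointAlg B x :=
  Algebra.mem_sInf.mpr fun _ h𝒜 => h𝒜.2.1 s hs

namespace AssocScheme

variable {s t : Finset (Z × Z)}

lemma nonempty (A : AssocScheme Z) : Nonempty Z :=
  let ⟨p, _⟩ := A.nonempty_mem _ A.id_mem
  ⟨p.1⟩

lemma notMem_of_mem_of_ne (A : AssocScheme Z) (hs : s ∈ A.rels) (ht : t ∈ A.rels)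
    (hne : s ≠ t) {p : Z × Z} (hp : p ∈ s) : p ∉ t :=
  Finset.disjoint_left.mp (A.pairwise_disjoint s hs t ht hne) hp

lemma card_pointFiber_eq (A : AssocScheme Z) (hs : s ∈ A.rels) (x x' : Z) :
    (pointFiber x s).card = (pointFiber x' s).card := by
  have hdiag : ∀ z : Z, (z, z) ∈ diagRel Z := fun z => by simp [diagRel]
  have h := A.pconst s hs (convRel s) (A.conv_mem s hs) (diagRel Z) A.id_mem
    (x, x) (hdiag x) (x', x') (hdiag x')
  simpa [mem_convRel_iff, pointFiber] using h

lemma adjMat_mul_allOnes (A : AssocScheme Z) (hs : s ∈ A.rels) :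
    ∃ c : ℂ, adjMat s * allOnes Z = c • allOnes Z := by
  obtain ⟨x₁⟩ := A.nonempty
  refine ⟨(pointFiber x₁ s).card, ?_⟩
  ext x y
  rw [← A.card_pointFiber_eq hs x]
  simp [adjMat, allOnes, mul_apply, pointFiber, Finset.sum_boole]

lemma allOnes_mul_adjMat (A : AssocScheme Z) (hs : s ∈ A.rels) :
    ∃ c : ℂ, allOnes Z * adjMat s = c • allOnes Z := by
  obtain ⟨c, hc⟩ := A.adjMat_mul_allOnes (A.conv_mem s hs)
  refine ⟨c, ?_⟩
  rw [← transpose_transpose (allOnes Z * adjMat s), transpose_mul, adjMat_transpose,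
    allOnes_transpose, hc, transpose_smul, allOnes_transpose]

end AssocScheme

end Relations

section ZeroOne

variable {Z : Type*} {C D : Matrix Z Z ℂ}

lemma IsZeroOne.sub (hC : IsZeroOne C) (hD : IsZeroOne D)
    (hDC : ∀ i j, D i j = 1 → C i j = 1) : IsZeroOne (C - D) := by
  intro i j
  rcases hD i j with h | h
  · simpa [h] using hC i j
  · simp [h, hDC i j h]

variable [Fintype Z]

noncomputable def onesCard (C : Matrix Z Z ℂ) : ℕ :=
  (Finset.univ.filter fun p : Z × Z => C p.1 p.2 = 1).card

lemma IsZeroOne.onesCard_eq_add (hC : IsZeroOne C) (hD : IsZeroOne D)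
    (hDC : ∀ i j, D i j = 1 → C i j = 1) : onesCard C = onesCard D + onesCard (C - D) := by
  simp only [onesCard, Finset.card_filter, ← Finset.sum_add_distrib]
  refine Finset.sum_congr rfl fun p _ => ?_
  rcases hD p.1 p.2 with h | h
  · rcases hC p.1 p.2 with h' | h' <;> simp [h, h']
  · simp [h, hDC _ _ h]

lemma IsZeroOne.onesCard_pos (hC : IsZeroOne C) (hne : C ≠ 0) : 0 < onesCard C := by
  obtain ⟨i, j, hij⟩ : ∃ i j, C i j ≠ 0 := by
    by_contra! h
    exact hne (ext h)
  exact Finset.card_pos.mpr ⟨(i, j), by simpa using (hC i j).resolve_left hij⟩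

variable [DecidableEq Z]

/-- Every 0/1 matrix of `𝒜` is a sum of basic relation matrices of `𝒜`: split off a proper
0/1 minorant and induct on the number of ones. -/
theorem IsZeroOne.induction_on_isBasicMatrix {𝒜 : Subalgebra ℂ (Matrix Z Z ℂ)}
    {P : Matrix Z Z ℂ → Prop} (zero : P 0) (add : ∀ C D, P C → P D → P (C + D))
    (basic : ∀ D, IsBasicMatrix 𝒜 D → P D) (hC : C ∈ 𝒜) (h01 : IsZeroOne C) : P C := by
  induction hn : onesCard C using Nat.strong_induction_on generalizing C with
  | _ n ih =>
  by_cases hC0 : C = 0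
  · exact hC0 ▸ zero
  by_cases hbasic : IsBasicMatrix 𝒜 C
  · exact basic C hbasic
  simp only [IsBasicMatrix, not_and, not_forall, not_or] at hbasic
  obtain ⟨D, hD, hD01, hDC, hD0, hDC'⟩ := hbasic hC h01 hC0
  have hcard := h01.onesCard_eq_add hD01 hDC
  have hsub := h01.sub hD01 hDC
  have hD_pos := hD01.onesCard_pos hD0
  have hsub_pos := hsub.onesCard_pos (sub_ne_zero.mpr (Ne.symm hDC'))
  rw [← add_sub_cancel D C]
  exact add D (C - D) (ih _ (by omega) hD hD01 rfl) (ih _ (by omega) (sub_mem hC hD) hsub rfl)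

end ZeroOne

section Adjoin

variable {R A : Type*} [CommRing R] [Ring A] [Algebra R A]

theorem mul_mem_span_of_mem_adjoin {G S : Set A}
    (hG : ∀ g ∈ G, ∀ s ∈ S, g * s ∈ Submodule.span R S ∧ s * g ∈ Submodule.span R S)
    {a m : A} (ha : a ∈ Algebra.adjoin R G) (hm : m ∈ Submodule.span R S) :
    a * m ∈ Submodule.span R S ∧ m * a ∈ Submodule.span R S := by
  induction ha using Algebra.adjoin_induction generalizing m with
  | mem g hg =>
    induction hm using Submodule.span_induction with
    | mem s hs => exact hG g hg s hs
    | zero => simp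
    | add x y _ _ hx hy =>
      simpa [mul_add, add_mul] using ⟨add_mem hx.1 hy.1, add_mem hx.2 hy.2⟩
    | smul r x _ hx => simpa using ⟨Submodule.smul_mem _ r hx.1, Submodule.smul_mem _ r hx.2⟩
  | algebraMap r =>
    rw [← Algebra.commutes, ← Algebra.smul_def]
    exact ⟨Submodule.smul_mem _ r hm, Submodule.smul_mem _ r hm⟩
  | add x y _ _ hx hy =>
    simpa [mul_add, add_mul] using ⟨add_mem (hx hm).1 (hy hm).1, add_mem (hx hm).2 (hy hm).2⟩
  | mul x y _ _ hx hy =>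
    exact ⟨mul_assoc x y m ▸ (hx (hy hm).1).1, (mul_assoc m x y).symm ▸ (hy (hx hm).2).2⟩

end Adjoin

section MatrixUnits

variable {ι R A : Type*} [Fintype ι] [DecidableEq ι] [CommRing R] [Ring A] [Algebra R A]
  {e : ι → ι → A} {φ : A →ₗ[R] Matrix ι ι R}

lemma sum_smul_matrixUnits_of_mem_span (hφ : ∀ a b, φ (e a b) = single a b 1) {x : A}
    (hx : x ∈ Submodule.span R (Set.range fun p : ι × ι => e p.1 p.2)) :
    ∑ a, ∑ b, φ x a b • e a b = x := by
  obtain ⟨c, rfl⟩ := (Submodule.mem_span_range_iff_exists_fun R).mp hx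
  simp [hφ, Matrix.sum_apply, single_apply, Fintype.sum_prod_type, ite_and]

lemma map_sum_smul_matrixUnits (hφ : ∀ a b, φ (e a b) = single a b 1) (N : Matrix ι ι R) :
    φ (∑ a, ∑ b, N a b • e a b) = N := by
  conv_rhs => rw [matrix_eq_sum_single N]
  simp [hφ, smul_single]

lemma injOn_span_of_map_eq_single (hφ : ∀ a b, φ (e a b) = single a b 1) :
    Set.InjOn φ (Submodule.span R (Set.range fun p : ι × ι => e p.1 p.2)) :=
  fun x hx y hy h => by
    rw [← sum_smul_matrixUnits_of_mem_span hφ hx, ← sum_smul_matrixUnits_of_mem_span hφ hy, h]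

lemma image_span_eq_univ_of_map_eq_single (hφ : ∀ a b, φ (e a b) = single a b 1) :
    φ '' (Submodule.span R (Set.range fun p : ι × ι => e p.1 p.2)) = Set.univ :=
  Set.eq_univ_of_forall fun N => ⟨∑ a, ∑ b, N a b • e a b,
    Submodule.sum_mem _ fun a _ => Submodule.sum_mem _ fun b _ =>
      Submodule.smul_mem _ _ (Submodule.subset_span ⟨(a, b), rfl⟩),
    map_sum_smul_matrixUnits hφ N⟩

lemma map_mul_of_matrixUnits (he : ∀ a b c d, e a b * e c d = if b = c then e a d else 0)
    (hφ : ∀ a b, φ (e a b) = single a b 1) {x y : A}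
    (hx : x ∈ Submodule.span R (Set.range fun p : ι × ι => e p.1 p.2))
    (hy : y ∈ Submodule.span R (Set.range fun p : ι × ι => e p.1 p.2)) :
    φ (x * y) = φ x * φ y := by
  induction hx, hy using Submodule.span_induction₂ with
  | mem_mem x y hx hy =>
    obtain ⟨⟨a, b⟩, rfl⟩ := hx
    obtain ⟨⟨c, d⟩, rfl⟩ := hy
    dsimp only
    rw [he, hφ, hφ]
    split_ifs with h
    · rw [h, hφ, single_mul_single_same, one_mul]
    · rw [map_zero, single_mul_single_of_ne 1 a b c h 1]
  | zero_left => simp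
  | zero_right => simp
  | add_left x y z _ _ _ hx hy => simp [add_mul, hx, hy]
  | add_right x y z _ _ _ hx hy => simp [mul_add, hx, hy]
  | smul_left r x y _ _ h => simp [h]
  | smul_right r x y _ _ h => simp [h]

end MatrixUnits

section TraceDual

variable {ι n R : Type*} [DecidableEq ι] [Fintype n] [DecidableEq n] [CommRing R]

def traceDual (e : ι → ι → Matrix n n R) : Matrix n n R →ₗ[R] Matrix ι ι R where
  toFun M := of fun a b => trace (M * e b a)
  map_add' M N := by ext; simp [add_mul]
  map_smul' c M := by ext; simp

lemma traceDual_apply_matrixUnit {e : ι → ι → Matrix n n R}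
    (he : ∀ a b c d, e a b * e c d = if b = c then e a d else 0)
    (htr : ∀ a b, trace (e a b) = if a = b then 1 else 0) (a b : ι) :
    traceDual e (e a b) = single a b 1 := by
  ext c d
  simp only [traceDual, LinearMap.coe_mk, AddHom.coe_mk, of_apply, he, single_apply]
  split_ifs with h1 h2 h2 <;> simp_all

end TraceDual

section Fibers

variable {Y : Type*} [DecidableEq Y] {enum : Finset (Y × Y) → Fin 3 → Y}
  {s t u : Finset (Y × Y)} {ψ : AddChar (Fin 3) ℂ}

noncomputable def fiberVec (enum : Finset (Y × Y) → Fin 3 → Y) (t : Finset (Y × Y))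
    (ψ : AddChar (Fin 3) ℂ) : Y → ℂ :=
  ∑ i, Pi.single (enum t i) (ψ i)

lemma fiberVec_apply (y : Y) :
    fiberVec enum t ψ y = ∑ i, if y = enum t i then ψ i else 0 := by
  simp [fiberVec, Pi.single_apply]

lemma fiberVec_apply_enum (hinj : Function.Injective (enum t)) (i : Fin 3) :
    fiberVec enum t ψ (enum t i) = ψ i := by
  simp [fiberVec_apply, hinj.eq_iff]

lemma fiberVec_apply_eq_zero {y : Y} (hy : ∀ i, enum t i ≠ y) : fiberVec enum t ψ y = 0 := by
  rw [fiberVec_apply]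
  exact Finset.sum_eq_zero fun i _ => if_neg (hy i).symm

lemma sum_cyc_eq_vecMulVec (enum : Finset (Y × Y) → Fin 3 → Y) (t t' : Finset (Y × Y)) :
    cyc enum t t' 0 + omega3 • cyc enum t t' 1 + omega3 ^ 2 • cyc enum t t' 2 =
      vecMulVec (fiberVec enum t omegaChar⁻¹) (fiberVec enum t' omegaChar) := by
  have hsum : cyc enum t t' 0 + omega3 • cyc enum t t' 1 + omega3 ^ 2 • cyc enum t t' 2 =
      ∑ k, omegaChar k • cyc enum t t' k := by
    simp [Fin.sum_univ_three, omegaChar]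
  rw [hsum]
  ext y y'
  simp only [Matrix.sum_apply, Matrix.smul_apply, cyc, vecMulVec_apply, fiberVec_apply,
    single_apply, Finset.sum_mul_sum, Finset.smul_sum]
  rw [Finset.sum_comm]
  refine Finset.sum_congr rfl fun i _ => ?_
  conv_rhs => rw [← Equiv.sum_comp (Equiv.addLeft i)]
  refine Finset.sum_congr rfl fun k _ => ?_
  have hχ : omegaChar (-i) * omegaChar (i + k) = omegaChar k := by
    rw [← AddChar.map_add_eq_mul, neg_add_cancel_left]
  split_ifs <;> simp_all

variable [Fintype Y] {B : AssocScheme Y} {y₀ : Y}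

lemma mulVec_fiberVec_apply (M : Matrix Y Y ℂ) (y : Y) :
    (M *ᵥ fiberVec enum t ψ) y = ∑ i, M y (enum t i) * ψ i := by
  simp [fiberVec, mulVec_sum, mulVec_single, mul_comm]

lemma dotProduct_fiberVec (v : Y → ℂ) : v ⬝ᵥ fiberVec enum t ψ = ∑ i, v (enum t i) * ψ i := by
  simp [fiberVec, dotProduct_sum, dotProduct_single]

lemma eps_mulVec_fiberVec_of_forall_mem {U : Finset Y} (h : ∀ i, enum t i ∈ U) :
    eps U *ᵥ fiberVec enum t ψ = fiberVec enum t ψ := by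
  funext y
  rw [eps, mulVec_diagonal]
  by_cases hy : y ∈ U
  · simp [hy]
  · simp [hy, fiberVec_apply_eq_zero fun i (hi : enum t i = y) => hy (hi ▸ h i)]

lemma eps_mulVec_fiberVec_of_forall_notMem {U : Finset Y} (h : ∀ i, enum t i ∉ U) :
    eps U *ᵥ fiberVec enum t ψ = 0 := by
  funext y
  rw [eps, mulVec_diagonal]
  by_cases hy : y ∈ U
  · simp [fiberVec_apply_eq_zero fun i (hi : enum t i = y) => h i (hi ▸ hy)]
  · simp [hy]

noncomputable def fiberSpan (B : AssocScheme Y) (enum : Finset (Y × Y) → Fin 3 → Y)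
    (ψ : AddChar (Fin 3) ℂ) : Submodule ℂ (Y → ℂ) :=
  Submodule.span ℂ ((fun u => fiberVec enum u ψ) '' ↑(B.rels.erase (diagRel Y)))

lemma fiberVec_mem_fiberSpan (hu : u ∈ B.rels.erase (diagRel Y)) :
    fiberVec enum u ψ ∈ fiberSpan B enum ψ :=
  Submodule.subset_span ⟨u, hu, rfl⟩

namespace IsEnum

variable (he : IsEnum B y₀ enum)
include he

lemma injective (ht : t ∈ B.rels.erase (diagRel Y)) : Function.Injective (enum t) :=
  (he t (Finset.mem_of_mem_erase ht) (Finset.ne_of_mem_erase ht)).1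

lemma mem (ht : t ∈ B.rels.erase (diagRel Y)) (i : Fin 3) : (y₀, enum t i) ∈ t :=
  mem_pointFiber_iff.mp
    (((he t (Finset.mem_of_mem_erase ht) (Finset.ne_of_mem_erase ht)).2 _).mpr ⟨i, rfl⟩)

lemma enum_ne_base (ht : t ∈ B.rels.erase (diagRel Y)) (i : Fin 3) : enum t i ≠ y₀ := by
  intro h
  refine B.notMem_of_mem_of_ne (Finset.mem_of_mem_erase ht) B.id_mem
    (Finset.ne_of_mem_erase ht) (he.mem ht i) ?_
  simp [diagRel, h]

lemma enum_ne_enum (hu : u ∈ B.rels.erase (diagRel Y)) (ht : t ∈ B.rels.erase (diagRel Y))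
    (hne : u ≠ t) (i j : Fin 3) : enum u i ≠ enum t j := fun h =>
  B.notMem_of_mem_of_ne (Finset.mem_of_mem_erase hu) (Finset.mem_of_mem_erase ht) hne
    (he.mem hu i) (h ▸ he.mem ht j)

lemma enum_mem_pointFiber_iff (hs : s ∈ B.rels) (ht : t ∈ B.rels.erase (diagRel Y))
    (i : Fin 3) : enum t i ∈ pointFiber y₀ s ↔ s = t := by
  refine ⟨fun h => ?_, by rintro rfl; exact mem_pointFiber_iff.mpr (he.mem ht i)⟩
  by_contra hne
  exact B.notMem_of_mem_of_ne hs (Finset.mem_of_mem_erase ht) hne (mem_pointFiber_iff.mp h)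
    (he.mem ht i)

lemma eq_base_or_exists_enum (y : Y) :
    y = y₀ ∨ ∃ u ∈ B.rels.erase (diagRel Y), ∃ l, enum u l = y := by
  obtain ⟨u, hu, hy⟩ := B.cover (y₀, y)
  by_cases hud : u = diagRel Y
  · subst hud
    exact Or.inl (by simpa [diagRel, eq_comm] using hy)
  · exact Or.inr ⟨u, Finset.mem_erase.mpr ⟨hud, hu⟩,
      ((he u hu hud).2 y).mp (mem_pointFiber_iff.mpr hy)⟩

lemma adjMat_base_enum (hs : s ∈ B.rels) (ht : t ∈ B.rels.erase (diagRel Y)) (i : Fin 3) :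
    adjMat s y₀ (enum t i) = if s = t then 1 else 0 := by
  simp [adjMat, ← mem_pointFiber_iff, he.enum_mem_pointFiber_iff hs ht]

lemma fiberVec_dotProduct_fiberVec (hu : u ∈ B.rels.erase (diagRel Y))
    (ht : t ∈ B.rels.erase (diagRel Y)) :
    fiberVec enum u ψ ⬝ᵥ fiberVec enum t ψ⁻¹ = if u = t then 3 else 0 := by
  rw [dotProduct_fiberVec]
  split_ifs with h
  · subst h
    simp [fiberVec_apply_enum (he.injective hu), ← AddChar.map_add_eq_mul]
  · simp [fiberVec_apply_eq_zero (fun i => he.enum_ne_enum hu ht h i _)]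

lemma eq_sum_fiberVec {f : Y → ℂ} (h₀ : f y₀ = 0)
    (hf : ∀ u ∈ B.rels.erase (diagRel Y), ∀ l, f (enum u l) = ψ l * f (enum u 0)) :
    f = ∑ u ∈ B.rels.erase (diagRel Y), f (enum u 0) • fiberVec enum u ψ := by
  funext y
  rw [Finset.sum_apply]
  rcases he.eq_base_or_exists_enum y with rfl | ⟨u, hu, l, rfl⟩
  · refine h₀.trans (Finset.sum_eq_zero fun u hu => ?_).symm
    rw [Pi.smul_apply, fiberVec_apply_eq_zero (he.enum_ne_base hu), smul_zero]
  · rw [Finset.sum_eq_single_of_mem u hu fun u' hu' hne => by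
      simp [fiberVec_apply_eq_zero (fun i => he.enum_ne_enum hu' hu hne i l)]]
    simp [fiberVec_apply_enum (he.injective hu), hf u hu l, mul_comm]

lemma eps_pointFiber_mulVec_fiberVec_mem (hs : s ∈ B.rels) (ht : t ∈ B.rels.erase (diagRel Y)) :
    eps (pointFiber y₀ s) *ᵥ fiberVec enum t ψ ∈ fiberSpan B enum ψ := by
  by_cases hst : s = t
  · rw [eps_mulVec_fiberVec_of_forall_mem fun i => (he.enum_mem_pointFiber_iff hs ht i).mpr hst]
    exact fiberVec_mem_fiberSpan ht
  · rw [eps_mulVec_fiberVec_of_forall_notMem fun i h =>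
      hst ((he.enum_mem_pointFiber_iff hs ht i).mp h)]
    exact zero_mem _

lemma eps_base_mulVec_fiberVec (ht : t ∈ B.rels.erase (diagRel Y)) :
    eps {y₀} *ᵥ fiberVec enum t ψ = 0 :=
  eps_mulVec_fiberVec_of_forall_notMem fun i => by simpa using he.enum_ne_base ht i

end IsEnum

namespace IsWellOrdering

variable (hwo : IsWellOrdering B y₀ enum)
include hwo

lemma apply_add_one_of_isBasicMatrix (hu : u ∈ B.rels.erase (diagRel Y))
    (ht : t ∈ B.rels.erase (diagRel Y)) {D : Matrix Y Y ℂ}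
    (hD : IsBasicMatrix (onePointAlg B y₀) D) (i j : Fin 3) :
    D (enum u (i + 1)) (enum t (j + 1)) = D (enum u i) (enum t j) := by
  by_cases hz : ∃ i j : Fin 3, D (enum u i) (enum t j) ≠ 0
  · obtain ⟨k, hk⟩ := hwo.2 u (Finset.mem_of_mem_erase hu) (Finset.ne_of_mem_erase hu)
      t (Finset.mem_of_mem_erase ht) (Finset.ne_of_mem_erase ht) D hD hz
    simp [hk, add_right_comm i 1 k]
  · simp only [not_exists, not_not] at hz
    rw [hz, hz]

lemma apply_add_one_of_mem (hu : u ∈ B.rels.erase (diagRel Y))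
    (ht : t ∈ B.rels.erase (diagRel Y)) {C : Matrix Y Y ℂ} (hC : C ∈ onePointAlg B y₀)
    (h01 : IsZeroOne C) (i j : Fin 3) :
    C (enum u (i + 1)) (enum t (j + 1)) = C (enum u i) (enum t j) :=
  IsZeroOne.induction_on_isBasicMatrix
    (P := fun C => ∀ i j, C (enum u (i + 1)) (enum t (j + 1)) = C (enum u i) (enum t j))
    (by simp) (fun C D hC hD i j => by simp [hC i j, hD i j])
    (fun _ hD => hwo.apply_add_one_of_isBasicMatrix hu ht hD) hC h01 i j

lemma adjMat_apply_add (hs : s ∈ B.rels) (hu : u ∈ B.rels.erase (diagRel Y))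
    (ht : t ∈ B.rels.erase (diagRel Y)) (i j k : Fin 3) :
    adjMat s (enum u (i + k)) (enum t (j + k)) = adjMat s (enum u i) (enum t j) := by
  have h1 := hwo.apply_add_one_of_mem hu ht (adjMat_mem_onePointAlg hs y₀) (isZeroOne_adjMat s)
  fin_cases k
  · simp
  · exact h1 i j
  · have h2 : (2 : Fin 3) = 1 + 1 := rfl
    simp only [Fin.reduceFinMk, h2, ← add_assoc, h1]

lemma adjMat_mulVec_fiberVec_mem (hs : s ∈ B.rels) (ht : t ∈ B.rels.erase (diagRel Y))
    (hψ : ψ ≠ 1) : adjMat s *ᵥ fiberVec enum t ψ ∈ fiberSpan B enum ψ := by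
  have he := hwo.1
  rw [he.eq_sum_fiberVec (f := adjMat s *ᵥ fiberVec enum t ψ) ?base ?shift]
  · exact Submodule.sum_mem _ fun u hu => Submodule.smul_mem _ _ (fiberVec_mem_fiberSpan hu)
  case base =>
    simp_rw [mulVec_fiberVec_apply, he.adjMat_base_enum hs ht, ite_mul, one_mul, zero_mul]
    split_ifs
    · exact AddChar.sum_eq_zero_of_ne_one hψ
    · simp
  case shift =>
    intro u hu l
    simp only [mulVec_fiberVec_apply, Finset.mul_sum]
    rw [← Equiv.sum_comp (Equiv.addRight l)]
    refine Finset.sum_congr rfl fun i _ => ?_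
    have h := hwo.adjMat_apply_add hs hu ht 0 i l
    rw [zero_add] at h
    simp [h, AddChar.map_add_eq_mul]
    ring

end IsWellOrdering

end Fibers

section GMatrices

variable {X Y : Type*} [Fintype X] [DecidableEq Y] {enum : Finset (Y × Y) → Fin 3 → Y}
  {t t' t'' : Finset (Y × Y)}

lemma Gmat_eq_vecMulVec : Gmat X enum t t' = (3 * (Fintype.card X : ℂ))⁻¹ •
    (allOnes X ⊗ₖ vecMulVec (fiberVec enum t omegaChar⁻¹) (fiberVec enum t' omegaChar)) := by
  rw [Gmat, sum_cyc_eq_vecMulVec]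

lemma three_mul_card_ne_zero [Nonempty X] : (3 * (Fintype.card X : ℂ)) ≠ 0 := by
  simp [Fintype.card_ne_zero]

variable [Fintype Y] {B : AssocScheme Y} {y₀ : Y}

lemma kronecker_mul_Gmat (P : Matrix X X ℂ) (Q : Matrix Y Y ℂ) :
    (P ⊗ₖ Q) * Gmat X enum t t' = (3 * (Fintype.card X : ℂ))⁻¹ • ((P * allOnes X) ⊗ₖ
      vecMulVec (Q *ᵥ fiberVec enum t omegaChar⁻¹) (fiberVec enum t' omegaChar)) := by
  rw [Gmat_eq_vecMulVec, Matrix.mul_smul, ← mul_kronecker_mul, mul_vecMulVec]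

lemma Gmat_mul_kronecker (P : Matrix X X ℂ) (Q : Matrix Y Y ℂ) :
    Gmat X enum t t' * (P ⊗ₖ Q) = (3 * (Fintype.card X : ℂ))⁻¹ • ((allOnes X * P) ⊗ₖ
      vecMulVec (fiberVec enum t omegaChar⁻¹) (Qᵀ *ᵥ fiberVec enum t' omegaChar)) := by
  rw [Gmat_eq_vecMulVec, Matrix.smul_mul, ← mul_kronecker_mul, vecMulVec_mul, mulVec_transpose]

variable [Nonempty X]

lemma IsEnum.Gmat_mul_Gmat (he : IsEnum B y₀ enum) (ht' : t' ∈ B.rels.erase (diagRel Y))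
    (ht'' : t'' ∈ B.rels.erase (diagRel Y)) (t t''' : Finset (Y × Y)) :
    Gmat X enum t t' * Gmat X enum t'' t''' = if t' = t'' then Gmat X enum t t''' else 0 := by
  have h := three_mul_card_ne_zero (X := X)
  rw [Gmat_eq_vecMulVec, Gmat_eq_vecMulVec, Matrix.smul_mul, Matrix.mul_smul, smul_smul,
    ← mul_kronecker_mul, allOnes_mul_allOnes, vecMulVec_mul_vecMulVec,
    he.fiberVec_dotProduct_fiberVec ht' ht'']
  split_ifs
  · rw [Gmat_eq_vecMulVec, vecMulVec_smul, smul_kronecker, kronecker_smul, smul_smul, smul_smul]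
    congr 1
    field_simp
  · simp

lemma IsEnum.trace_Gmat (he : IsEnum B y₀ enum) (ht : t ∈ B.rels.erase (diagRel Y))
    (ht' : t' ∈ B.rels.erase (diagRel Y)) :
    trace (Gmat X enum t t') = if t = t' then 1 else 0 := by
  have h := three_mul_card_ne_zero (X := X)
  have hdot := he.fiberVec_dotProduct_fiberVec (ψ := omegaChar⁻¹) ht ht'
  rw [inv_inv] at hdot
  rw [Gmat_eq_vecMulVec, trace_smul, trace_kronecker, trace_allOnes, trace_vecMulVec, hdot]
  split_ifs
  · rw [smul_eq_mul]
    field_simp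
  · simp

lemma smul_kronecker_vecMulVec_mem_span_of_mem_left (c : ℂ) {x : Y → ℂ}
    (hx : x ∈ fiberSpan B enum omegaChar⁻¹) (ht' : t' ∈ B.rels.erase (diagRel Y)) :
    c • (allOnes X ⊗ₖ vecMulVec x (fiberVec enum t' omegaChar)) ∈
      Submodule.span ℂ (GmatSet X B enum) := by
  induction hx using Submodule.span_induction generalizing c with
  | mem _ hx =>
    obtain ⟨u, hu, rfl⟩ := hx
    rw [← smul_inv_smul₀ (three_mul_card_ne_zero (X := X)) (allOnes X ⊗ₖ _),
      ← Gmat_eq_vecMulVec, smul_smul]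
    exact Submodule.smul_mem _ _ (Submodule.subset_span ⟨u, hu, t', ht', rfl⟩)
  | zero => simp
  | add x y _ _ hx hy =>
    rw [add_vecMulVec, kronecker_add, smul_add]
    exact add_mem (hx c) (hy c)
  | smul a x _ hx =>
    rw [smul_vecMulVec, kronecker_smul, smul_smul]
    exact hx _

lemma smul_kronecker_vecMulVec_mem_span_of_mem_right (c : ℂ) {x : Y → ℂ}
    (hx : x ∈ fiberSpan B enum omegaChar) (ht : t ∈ B.rels.erase (diagRel Y)) :
    c • (allOnes X ⊗ₖ vecMulVec (fiberVec enum t omegaChar⁻¹) x) ∈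
      Submodule.span ℂ (GmatSet X B enum) := by
  induction hx using Submodule.span_induction generalizing c with
  | mem _ hx =>
    obtain ⟨u, hu, rfl⟩ := hx
    rw [← smul_inv_smul₀ (three_mul_card_ne_zero (X := X)) (allOnes X ⊗ₖ _),
      ← Gmat_eq_vecMulVec, smul_smul]
    exact Submodule.smul_mem _ _ (Submodule.subset_span ⟨t, ht, u, hu, rfl⟩)
  | zero => simp
  | add x y _ _ hx hy =>
    rw [vecMulVec_add, kronecker_add, smul_add]
    exact add_mem (hx c) (hy c)
  | smul a x _ hx =>
    rw [vecMulVec_smul, kronecker_smul, smul_smul]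
    exact hx _

variable [DecidableEq X]

lemma IsWellOrdering.wreathGens_mul_Gmat_mem_span (hwo : IsWellOrdering B y₀ enum)
    (A : AssocScheme X) {x₀ : X} {g : Matrix (X × Y) (X × Y) ℂ}
    (hg : g ∈ wreathGens A B x₀ y₀) (ht : t ∈ B.rels.erase (diagRel Y))
    (ht' : t' ∈ B.rels.erase (diagRel Y)) :
    g * Gmat X enum t t' ∈ Submodule.span ℂ (GmatSet X B enum) ∧
      Gmat X enum t t' * g ∈ Submodule.span ℂ (GmatSet X B enum) := by
  have he := hwo.1
  have hω : omegaChar ≠ 1 := omegaChar_ne_one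
  rcases hg with ((⟨s, hs, rfl⟩ | ⟨s, hs, rfl⟩) | ⟨s, hs, -, rfl⟩) | ⟨s, hs, -, rfl⟩
  · obtain ⟨c, hc⟩ := A.adjMat_mul_allOnes hs
    obtain ⟨c', hc'⟩ := A.allOnes_mul_adjMat hs
    rw [kronecker_mul_Gmat, Gmat_mul_kronecker, hc, hc', transpose_one, one_mulVec, one_mulVec,
      smul_kronecker, smul_kronecker, smul_smul, smul_smul]
    exact ⟨smul_kronecker_vecMulVec_mem_span_of_mem_left _ (fiberVec_mem_fiberSpan ht) ht',
      smul_kronecker_vecMulVec_mem_span_of_mem_right _ (fiberVec_mem_fiberSpan ht') ht⟩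
  · rw [kronecker_mul_Gmat, Gmat_mul_kronecker, eps_transpose, he.eps_base_mulVec_fiberVec ht,
      he.eps_base_mulVec_fiberVec ht']
    simp
  · rw [kronecker_mul_Gmat, Gmat_mul_kronecker, allOnes_mul_allOnes, adjMat_transpose,
      smul_kronecker, smul_kronecker, smul_smul, smul_smul]
    exact ⟨smul_kronecker_vecMulVec_mem_span_of_mem_left _
        (hwo.adjMat_mulVec_fiberVec_mem hs ht (inv_ne_one.mpr hω)) ht',
      smul_kronecker_vecMulVec_mem_span_of_mem_right _
        (hwo.adjMat_mulVec_fiberVec_mem (B.conv_mem s hs) ht' hω) ht⟩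
  · rw [kronecker_mul_Gmat, Gmat_mul_kronecker, Matrix.one_mul, Matrix.mul_one, eps_transpose]
    exact ⟨smul_kronecker_vecMulVec_mem_span_of_mem_left _
        (he.eps_pointFiber_mulVec_fiberVec_mem hs ht) ht',
      smul_kronecker_vecMulVec_mem_span_of_mem_right _
        (he.eps_pointFiber_mulVec_fiberVec_mem hs ht') ht⟩

end GMatrices

lemma GmatSet_eq_range {X Y : Type*} [Fintype X] [Fintype Y] [DecidableEq Y]
    (B : AssocScheme Y) (enum : Finset (Y × Y) → Fin 3 → Y) :
    GmatSet X B enum = Set.range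
      fun p : ↥(B.rels.erase (diagRel Y)) × ↥(B.rels.erase (diagRel Y)) => Gmat X enum p.1 p.2 := by
  ext M
  simp [GmatSet, eq_comm]

section Statements

variable {X Y : Type*} [Fintype X] [DecidableEq X] [Fintype Y] [DecidableEq Y]

theorem stmt11_general (A : AssocScheme X) (B : AssocScheme Y) (x₀ : X) (y₀ : Y)
    (enum : Finset (Y × Y) → Fin 3 → Y) (hwo : IsWellOrdering B y₀ enum) :
    (∀ a ∈ wreathTerw A B x₀ y₀, ∀ m ∈ Submodule.span ℂ (GmatSet X B enum),
      a * m ∈ Submodule.span ℂ (GmatSet X B enum) ∧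
      m * a ∈ Submodule.span ℂ (GmatSet X B enum)) ∧
    (∀ t ∈ B.rels.erase (diagRel Y), ∀ t' ∈ B.rels.erase (diagRel Y),
      ∀ t'' ∈ B.rels.erase (diagRel Y), ∀ t''' ∈ B.rels.erase (diagRel Y),
      Gmat X enum t t' * Gmat X enum t''' t'' =
        if t' = t''' then Gmat X enum t t'' else 0) ∧
    ∃ φ : Matrix (X × Y) (X × Y) ℂ →ₗ[ℂ]
        Matrix ↥(B.rels.erase (diagRel Y)) ↥(B.rels.erase (diagRel Y)) ℂ,
      (∀ t t' : ↥(B.rels.erase (diagRel Y)),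
        φ (Gmat X enum ↑t ↑t') = Matrix.single t t' 1) ∧
      Set.InjOn φ (Submodule.span ℂ (GmatSet X B enum)) ∧
      φ '' (Submodule.span ℂ (GmatSet X B enum)) = Set.univ ∧
      ∀ a ∈ Submodule.span ℂ (GmatSet X B enum),
        ∀ b ∈ Submodule.span ℂ (GmatSet X B enum), φ (a * b) = φ a * φ b := by
  have : Nonempty X := A.nonempty
  have he := hwo.1
  let G (a b : ↥(B.rels.erase (diagRel Y))) : Matrix (X × Y) (X × Y) ℂ := Gmat X enum a b
  have hunits : ∀ a b c d, G a b * G c d = if b = c then G a d else 0 := fun a b c d => by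
    simpa only [Subtype.coe_inj] using he.Gmat_mul_Gmat (X := X) b.2 c.2 a d
  have hφ := traceDual_apply_matrixUnit hunits fun a b => by
    simpa only [Subtype.coe_inj] using he.trace_Gmat (X := X) a.2 b.2
  refine ⟨fun a ha m hm => mul_mem_span_of_mem_adjoin ?_ ha hm,
    fun t _ t' ht' t'' _ t''' ht''' => he.Gmat_mul_Gmat ht' ht''' t t'', traceDual G, hφ, ?_⟩
  · rintro g hg _ ⟨t, ht, t', ht', rfl⟩
    exact hwo.wreathGens_mul_Gmat_mem_span A hg ht ht'
  · rw [GmatSet_eq_range]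
    exact ⟨injOn_span_of_map_eq_single (e := G) hφ,
      image_span_eq_univ_of_map_eq_single (e := G) hφ,
      fun a ha b hb => map_mul_of_matrixUnits (e := G) hunits hφ ha hb⟩

theorem stmt11 (A : AssocScheme X) (B : AssocScheme Y) (h3 : ThreeEquivalenced B)
    (hT : 2 < B.rels.card) (x₀ : X) (y₀ : Y)
    (enum : Finset (Y × Y) → Fin 3 → Y) (hwo : IsWellOrdering B y₀ enum) :
    (∀ a ∈ wreathTerw A B x₀ y₀, ∀ m ∈ Submodule.span ℂ (GmatSet X B enum),
      a * m ∈ Submodule.span ℂ (GmatSet X B enum) ∧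
      m * a ∈ Submodule.span ℂ (GmatSet X B enum)) ∧
    (∀ t ∈ B.rels.erase (diagRel Y), ∀ t' ∈ B.rels.erase (diagRel Y),
      ∀ t'' ∈ B.rels.erase (diagRel Y), ∀ t''' ∈ B.rels.erase (diagRel Y),
      Gmat X enum t t' * Gmat X enum t''' t'' =
        if t' = t''' then Gmat X enum t t'' else 0) ∧
    ∃ φ : Matrix (X × Y) (X × Y) ℂ →ₗ[ℂ]
        Matrix ↥(B.rels.erase (diagRel Y)) ↥(B.rels.erase (diagRel Y)) ℂ,
      (∀ t t' : ↥(B.rels.erase (diagRel Y)),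
        φ (Gmat X enum ↑t ↑t') = Matrix.single t t' 1) ∧
      Set.InjOn φ (Submodule.span ℂ (GmatSet X B enum)) ∧
      φ '' (Submodule.span ℂ (GmatSet X B enum)) = Set.univ ∧
      ∀ a ∈ Submodule.span ℂ (GmatSet X B enum),
        ∀ b ∈ Submodule.span ℂ (GmatSet X B enum), φ (a * b) = φ a * φ b :=
  stmt11_general A B x₀ y₀ enum hwo

end Statements
end
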